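/- Let G be a connected simple graph, k an even integer ≥ 4. Then the spectral radius of the signless Laplacian tensor of G^{k,k/2} equals the spectral radius of the signless Laplacian matrix Q(G) = D(G) + A(G) of G. -/

import Mathlib

open Matrix

noncomputable def specRad {m : Type*} [Fintype m] [DecidableEq m]
    (M : Matrix m m ℝ) : ℝ :=
  sSup {r : ℝ | ∃ μ ∈ spectrum ℂ (M.map (Complex.ofReal)), r = ‖μ‖}

/-- The blow-up of a vertex `v` into a `(k/2)`-set. -/
def blow {V : Type*} [DecidableEq V] (k : ℕ) (v : V) : Finset (V × ℕ) :=
  ({v} : Finset V) ×ˢ Finset.range (k / 2)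

/-- The edge set of the hypergraph `G^{k,k/2}`. -/
def hEdges {V : Type*} [Fintype V] [DecidableEq V] (G : SimpleGraph V)
    [DecidableRel G.Adj] (k : ℕ) : Finset (Finset (V × ℕ)) :=
  (Finset.univ.filter fun p : V × V => G.Adj p.1 p.2).image
    (fun p => blow k p.1 ∪ blow k p.2)

/-- `(𝒬 x^{k-1})_u = d_u x_u^{k-1} + (𝒜 x^{k-1})_u` for the signless Laplacian tensor of
a `k`-uniform hypergraph with edge set `E`. -/
noncomputable def qPoly {W : Type*} [DecidableEq W] (E : Finset (Finset W)) (k : ℕ)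
    (x : W → ℂ) (u : W) : ℂ :=
  ((E.filter fun e => u ∈ e).card : ℂ) * (x u) ^ (k - 1) +
    ∑ e ∈ E.filter (fun e => u ∈ e), ∏ w ∈ e.erase u, x w

/-- The spectral radius of the signless Laplacian tensor of a `k`-uniform hypergraph. -/
noncomputable def hQSpecRad {W : Type*} [DecidableEq W] (E : Finset (Finset W))
    (k : ℕ) : ℝ :=
  sSup {r : ℝ | ∃ (lam : ℂ) (x : W → ℂ), x ≠ 0 ∧
    (∀ u, qPoly E k x u = lam * (x u) ^ (k - 1)) ∧ r = ‖lam‖}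

/-!
Both spectral radii equal the Perron root `ρ` of `Q(G)`. As `Q(G)` is symmetric and entrywise
nonnegative, its top eigenvalue `ρ` has a nonnegative eigenvector `y`, which is positive because
`G` is connected. Putting `y_v ^ (2 / k)` on each of the `k / 2` copies of `v` gives an eigenvector
of the signless Laplacian tensor of `G^{k,k/2}` with eigenvalue `ρ`. Conversely, given any complex
eigenpair `(λ, x)` of the matrix or of the tensor, scale the positive eigenvector so that it
dominates `|x|` with equality at some vertex; since both operators have nonnegative coefficients,
the eigen-equation at that vertex gives `|λ| ≤ ρ`.
-/

theorem Finset.exists_eq_mul_and_forall_le_mul {ι : Type*} {s : Finset ι} {f w : ι → ℝ}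
    (hw : ∀ i ∈ s, 0 < w i) {i₁ : ι} (hi₁ : i₁ ∈ s) (hf : 0 < f i₁) :
    ∃ i ∈ s, ∃ c, 0 < c ∧ f i = c * w i ∧ ∀ j ∈ s, f j ≤ c * w j := by
  obtain ⟨i, hi, hmax⟩ := s.exists_max_image (fun i => f i / w i) ⟨i₁, hi₁⟩
  refine ⟨i, hi, f i / w i, (div_pos hf (hw i₁ hi₁)).trans_le (hmax i₁ hi₁),
    (div_mul_cancel₀ _ (hw i hi).ne').symm, fun j hj => ?_⟩
  exact (div_le_iff₀ (hw j hj)).mp (hmax j hj)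

namespace Matrix

variable {n : Type*} [Fintype n]

theorem mem_spectrum_iff_exists_mulVec_eq_smul [DecidableEq n] {K : Type*} [Field K]
    (A : Matrix n n K) (μ : K) :
    μ ∈ spectrum K A ↔ ∃ v ≠ 0, A *ᵥ v = μ • v := by
  rw [← spectrum_toLin', ← Module.End.hasEigenvalue_iff_mem_spectrum]
  constructor
  · intro h
    obtain ⟨v, hv, hv0⟩ := h.exists_hasEigenvector
    exact ⟨v, hv0, by simpa [Module.End.mem_eigenspace_iff] using hv⟩
  · rintro ⟨v, hv0, hv⟩
    exact Module.End.hasEigenvalue_of_hasEigenvector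
      ⟨Module.End.mem_eigenspace_iff.mpr (by simpa using hv), hv0⟩

open scoped MatrixOrder in
theorem IsHermitian.posSemidef_smul_one_sub [DecidableEq n] {A : Matrix n n ℝ}
    (hA : A.IsHermitian) {r : ℝ} (h : ∀ i, hA.eigenvalues i ≤ r) :
    (r • (1 : Matrix n n ℝ) - A).PosSemidef := by
  have : A ≤ algebraMap ℝ (Matrix n n ℝ) r := by
    refine le_algebraMap_of_spectrum_le ?_ hA.isSelfAdjoint
    rw [hA.spectrum_real_eq_range_eigenvalues]
    rintro _ ⟨i, rfl⟩
    exact h i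
  rwa [Algebra.algebraMap_eq_smul_one] at this

theorem dotProduct_mulVec_le_abs {A : Matrix n n ℝ} (hA : ∀ i j, 0 ≤ A i j) (x : n → ℝ) :
    x ⬝ᵥ (A *ᵥ x) ≤ |x| ⬝ᵥ (A *ᵥ |x|) := by
  simp only [dotProduct, mulVec, Finset.mul_sum, Pi.abs_apply]
  refine Finset.sum_le_sum fun i _ => Finset.sum_le_sum fun j _ => ?_
  calc x i * (A i j * x j) = A i j * (x i * x j) := by ring
    _ ≤ A i j * (|x i| * |x j|) :=
      mul_le_mul_of_nonneg_left ((le_abs_self _).trans (abs_mul _ _).le) (hA i j)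
    _ = |x i| * (A i j * |x j|) := by ring

theorem IsHermitian.exists_nonneg_eigenvector [DecidableEq n] [Nonempty n] {A : Matrix n n ℝ}
    (hA : A.IsHermitian) (hA₀ : ∀ i j, 0 ≤ A i j) :
    ∃ (ρ : ℝ) (y : n → ℝ), y ≠ 0 ∧ 0 ≤ y ∧ A *ᵥ y = ρ • y := by
  obtain ⟨i₀, -, hmax⟩ := Finset.univ.exists_max_image hA.eigenvalues Finset.univ_nonempty
  set ρ := hA.eigenvalues i₀
  set x : n → ℝ := ⇑(hA.eigenvectorBasis i₀)
  have hx : A *ᵥ x = ρ • x := hA.mulVec_eigenvectorBasis i₀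
  have hx0 : x ≠ 0 := fun h =>
    hA.eigenvectorBasis.orthonormal.ne_zero i₀ (by ext i; exact congrFun h i)
  have hN : (ρ • (1 : Matrix n n ℝ) - A).PosSemidef :=
    hA.posSemidef_smul_one_sub fun i => hmax i (Finset.mem_univ i)
  have form : ∀ z : n → ℝ,
      z ⬝ᵥ ((ρ • (1 : Matrix n n ℝ) - A) *ᵥ z) = ρ * (z ⬝ᵥ z) - z ⬝ᵥ (A *ᵥ z) :=
    fun z => by simp [sub_mulVec, smul_mulVec, dotProduct_sub, dotProduct_smul]
  -- `x` belongs to the top eigenvalue `ρ`, and `|x|` does at least as well in the Rayleigh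
  -- quotient, so the form of the positive semidefinite `ρ • 1 - A` vanishes at `|x|`.
  have hzero : |x| ⬝ᵥ ((ρ • (1 : Matrix n n ℝ) - A) *ᵥ |x|) = 0 := by
    have habs : |x| ⬝ᵥ |x| = x ⬝ᵥ x := by simp [dotProduct, Pi.abs_apply, abs_mul_abs_self]
    have hxx : x ⬝ᵥ (A *ᵥ x) = ρ * (x ⬝ᵥ x) := by rw [hx, dotProduct_smul, smul_eq_mul]
    refine le_antisymm ?_ (by simpa using hN.dotProduct_mulVec_nonneg |x|)
    rw [form, habs, ← hxx]
    linarith [dotProduct_mulVec_le_abs hA₀ x]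
  refine ⟨ρ, |x|, fun h => hx0 (funext fun i => abs_eq_zero.mp (congrFun h i)), abs_nonneg x, ?_⟩
  have := (hN.dotProduct_mulVec_zero_iff |x|).mp (by simpa using hzero)
  rwa [sub_mulVec, smul_mulVec, one_mulVec, sub_eq_zero, eq_comm] at this

theorem nonneg_of_mulVec_eq_smul [Nonempty n] {A : Matrix n n ℝ} (hA₀ : ∀ i j, 0 ≤ A i j)
    {ρ : ℝ} {y : n → ℝ} (hy : ∀ i, 0 < y i) (h : A *ᵥ y = ρ • y) : 0 ≤ ρ := by
  obtain ⟨i⟩ := ‹Nonempty n›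
  have hi : ρ * y i = ∑ j, A i j * y j := by
    rw [← smul_eq_mul, ← Pi.smul_apply, ← h]; rfl
  refine nonneg_of_mul_nonneg_left ?_ (hy i)
  rw [hi]
  exact Finset.sum_nonneg fun j _ => mul_nonneg (hA₀ i j) (hy j).le

theorem norm_map_ofReal_mulVec_le {A : Matrix n n ℝ} (hA₀ : ∀ i j, 0 ≤ A i j) {x : n → ℂ}
    {r : n → ℝ} (h : ∀ j, ‖x j‖ ≤ r j) (i : n) :
    ‖(A.map Complex.ofReal *ᵥ x) i‖ ≤ (A *ᵥ r) i := by
  refine (norm_sum_le _ _).trans (Finset.sum_le_sum fun j _ => ?_)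
  dsimp only
  rw [map_apply, norm_mul, Complex.norm_real, Real.norm_of_nonneg (hA₀ i j)]
  exact mul_le_mul_of_nonneg_left (h j) (hA₀ i j)

theorem norm_le_of_mulVec_eq_smul {A : Matrix n n ℝ} (hA₀ : ∀ i j, 0 ≤ A i j) {ρ : ℝ}
    {y : n → ℝ} (hy : ∀ i, 0 < y i) (hAy : A *ᵥ y = ρ • y) {μ : ℂ} {x : n → ℂ} (hx : x ≠ 0)
    (hAx : A.map Complex.ofReal *ᵥ x = μ • x) : ‖μ‖ ≤ ρ := by
  obtain ⟨i₁, hi₁⟩ := Function.ne_iff.mp hx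
  obtain ⟨i, -, c, hc, hi, hle⟩ := Finset.univ.exists_eq_mul_and_forall_le_mul
    (f := fun i => ‖x i‖) (fun i _ => hy i) (Finset.mem_univ i₁) (norm_pos_iff.mpr hi₁)
  have key : ‖μ‖ * (c * y i) ≤ ρ * (c * y i) :=
    calc ‖μ‖ * (c * y i) = ‖(A.map Complex.ofReal *ᵥ x) i‖ := by
          rw [hAx, Pi.smul_apply, smul_eq_mul, norm_mul, ← hi]
      _ ≤ (A *ᵥ (c • y)) i :=
          norm_map_ofReal_mulVec_le hA₀ (fun j => hle j (Finset.mem_univ j)) i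
      _ = ρ * (c * y i) := by
          rw [mulVec_smul, hAy, Pi.smul_apply, Pi.smul_apply, smul_eq_mul, smul_eq_mul]; ring
  exact le_of_mul_le_mul_right key (mul_pos hc (hy i))

end Matrix

namespace SimpleGraph

variable {V : Type*} [Fintype V] [DecidableEq V] (G : SimpleGraph V) [DecidableRel G.Adj]

def signlessLapMatrix (R : Type*) [AddMonoidWithOne R] : Matrix V V R :=
  G.degMatrix R + G.adjMatrix R

theorem isHermitian_signlessLapMatrix : (G.signlessLapMatrix ℝ).IsHermitian :=
  (G.isHermitian_degMatrix (R := ℝ)).add (G.isHermitian_adjMatrix (R := ℝ))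

theorem signlessLapMatrix_nonneg (v w : V) : 0 ≤ G.signlessLapMatrix ℝ v w := by
  simp only [signlessLapMatrix, degMatrix, Matrix.add_apply, Matrix.diagonal_apply,
    adjMatrix_apply]
  positivity

theorem signlessLapMatrix_mulVec_apply {R : Type*} [NonAssocSemiring R] (v : V) (x : V → R) :
    (G.signlessLapMatrix R *ᵥ x) v = G.degree v * x v + ∑ w ∈ G.neighborFinset v, x w := by
  rw [signlessLapMatrix, Matrix.add_mulVec, Pi.add_apply, degMatrix_mulVec_apply,
    adjMatrix_mulVec_apply]

theorem Connected.pos_of_signlessLapMatrix_mulVec_eq_smul {G : SimpleGraph V}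
    [DecidableRel G.Adj] (hG : G.Connected) {ρ : ℝ} {y : V → ℝ} (hy₀ : 0 ≤ y) (hy : y ≠ 0)
    (h : G.signlessLapMatrix ℝ *ᵥ y = ρ • y) (v : V) : 0 < y v := by
  have hadj : ∀ a b, G.Adj a b → y a = 0 → y b = 0 := by
    intro a b hab ha
    have hsum := congrFun h a
    rw [signlessLapMatrix_mulVec_apply, Pi.smul_apply, ha, smul_zero, mul_zero, zero_add,
      Finset.sum_eq_zero_iff_of_nonneg fun w _ => hy₀ w] at hsum
    exact hsum b ((mem_neighborFinset _ _ _).mpr hab)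
  have hwalk : ∀ a b, G.Walk a b → y a = 0 → y b = 0 := by
    intro a b p
    induction p with
    | nil => exact id
    | cons hab _ ih => exact fun ha => ih (hadj _ _ hab ha)
  obtain ⟨w, hw⟩ := Function.ne_iff.mp hy
  exact (hy₀ v).lt_of_ne fun hv => hw (hwalk v w (hG v w).some hv.symm)

theorem Connected.exists_pos_eigenvector_signlessLapMatrix {G : SimpleGraph V}
    [DecidableRel G.Adj] (hG : G.Connected) :
    ∃ (ρ : ℝ) (y : V → ℝ), (∀ v, 0 < y v) ∧ G.signlessLapMatrix ℝ *ᵥ y = ρ • y := by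
  have := hG.nonempty
  obtain ⟨ρ, y, hy, hy₀, h⟩ :=
    G.isHermitian_signlessLapMatrix.exists_nonneg_eigenvector G.signlessLapMatrix_nonneg
  exact ⟨ρ, y, hG.pos_of_signlessLapMatrix_mulVec_eq_smul hy₀ hy h, h⟩

theorem specRad_signlessLapMatrix_eq_of_mulVec_eq_smul [Nonempty V] {ρ : ℝ} {y : V → ℝ}
    (hy : ∀ v, 0 < y v) (h : G.signlessLapMatrix ℝ *ᵥ y = ρ • y) :
    specRad (G.signlessLapMatrix ℝ) = ρ := by
  have hρ := Matrix.nonneg_of_mulVec_eq_smul G.signlessLapMatrix_nonneg hy h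
  refine IsGreatest.csSup_eq ⟨⟨ρ, ?_, by simp [abs_of_nonneg hρ]⟩, ?_⟩
  · refine (Matrix.mem_spectrum_iff_exists_mulVec_eq_smul _ _).mpr
      ⟨fun v => (y v : ℂ), fun h0 => ?_, funext fun v => ?_⟩
    · obtain ⟨v⟩ := ‹Nonempty V›
      exact (hy v).ne' (Complex.ofReal_eq_zero.mp (congrFun h0 v))
    · change ((G.signlessLapMatrix ℝ).map Complex.ofRealHom *ᵥ Complex.ofRealHom ∘ y) v = _
      rw [← RingHom.map_mulVec, h]
      simp
  · rintro _ ⟨μ, hμ, rfl⟩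
    obtain ⟨x, hx, hμx⟩ := (Matrix.mem_spectrum_iff_exists_mulVec_eq_smul _ _).mp hμ
    exact Matrix.norm_le_of_mulVec_eq_smul G.signlessLapMatrix_nonneg hy h hx hμx

end SimpleGraph

theorem norm_qPoly_le {W : Type*} [DecidableEq W] (E : Finset (Finset W)) (k : ℕ)
    {x : W → ℂ} {r : W → ℝ} (h : ∀ w, ‖x w‖ ≤ r w) (u : W) :
    ‖qPoly E k x u‖ ≤ ‖qPoly E k (fun w => (r w : ℂ)) u‖ := by
  have hr : ∀ w, 0 ≤ r w := fun w => (norm_nonneg _).trans (h w)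
  have hreal : qPoly E k (fun w => (r w : ℂ)) u = ((((E.filter fun e => u ∈ e).card : ℝ) *
      r u ^ (k - 1) + ∑ e ∈ E.filter (fun e => u ∈ e), ∏ w ∈ e.erase u, r w : ℝ) : ℂ) := by
    simp [qPoly]
  rw [hreal, Complex.norm_real, Real.norm_of_nonneg (add_nonneg
    (mul_nonneg (Nat.cast_nonneg _) (pow_nonneg (hr u) _))
    (Finset.sum_nonneg fun e _ => Finset.prod_nonneg fun w _ => hr w))]
  refine (norm_add_le _ _).trans (add_le_add ?_ ?_)
  · rw [norm_mul, norm_pow, Complex.norm_natCast]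
    gcongr
    exact h u
  · refine (norm_sum_le _ _).trans (Finset.sum_le_sum fun e _ => ?_)
    rw [norm_prod]
    exact Finset.prod_le_prod (fun _ _ => norm_nonneg _) fun w _ => h w

theorem norm_le_of_qPoly_eq {W : Type*} [DecidableEq W] {E : Finset (Finset W)} {k : ℕ}
    {ρ : ℝ} (hρ : 0 ≤ ρ) {μ : ℂ} {x : W → ℂ} {r : W → ℝ} (hxr : ∀ w, ‖x w‖ ≤ r w) {u : W}
    (hu : x u ≠ 0) (hxu : ‖x u‖ = r u) (hμx : qPoly E k x u = μ * x u ^ (k - 1))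
    (hρr : qPoly E k (fun w => (r w : ℂ)) u = ρ * (r u : ℂ) ^ (k - 1)) : ‖μ‖ ≤ ρ := by
  have key : ‖μ‖ * ‖x u‖ ^ (k - 1) ≤ ρ * ‖x u‖ ^ (k - 1) :=
    calc ‖μ‖ * ‖x u‖ ^ (k - 1) = ‖qPoly E k x u‖ := by rw [hμx, norm_mul, norm_pow]
      _ ≤ ‖qPoly E k (fun w => (r w : ℂ)) u‖ := norm_qPoly_le E k hxr u
      _ = ρ * ‖x u‖ ^ (k - 1) := by
          rw [hρr, norm_mul, norm_pow, Complex.norm_real, Complex.norm_real,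
            Real.norm_of_nonneg hρ, hxu, Real.norm_of_nonneg (hxu ▸ norm_nonneg _)]
  exact le_of_mul_le_mul_right key (pow_pos (norm_pos_iff.mpr hu) _)

section BlowUp

variable {V : Type*} [DecidableEq V]

theorem mem_blow {k : ℕ} {v : V} {u : V × ℕ} : u ∈ blow k v ↔ u.1 = v ∧ u.2 < k / 2 := by
  rw [blow, Finset.mem_product, Finset.mem_singleton, Finset.mem_range]

theorem card_blow (k : ℕ) (v : V) : (blow k v).card = k / 2 := by
  simp [blow]

variable [Fintype V] (G : SimpleGraph V) [DecidableRel G.Adj]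

theorem mem_hEdges {k : ℕ} {e : Finset (V × ℕ)} :
    e ∈ hEdges G k ↔ ∃ a b, G.Adj a b ∧ blow k a ∪ blow k b = e := by
  simp [hEdges]

theorem qPoly_hEdges_of_le {k : ℕ} (x : V × ℕ → ℂ) {u : V × ℕ} (hu : k / 2 ≤ u.2) :
    qPoly (hEdges G k) k x u = 0 := by
  have : (hEdges G k).filter (fun e => u ∈ e) = ∅ := by
    refine Finset.filter_eq_empty_iff.mpr fun e he hue => ?_
    obtain ⟨a, b, -, rfl⟩ := (mem_hEdges G).mp he
    rcases Finset.mem_union.mp hue with h | h <;> exact (mem_blow.mp h).2.not_ge hu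
  simp [qPoly, this]

theorem eq_zero_of_qPoly_hEdges_eq {k : ℕ} (hk2 : 2 ≤ k) {μ : ℂ} (hμ : μ ≠ 0)
    {x : V × ℕ → ℂ} {u : V × ℕ} (hμx : qPoly (hEdges G k) k x u = μ * x u ^ (k - 1))
    (hu : k / 2 ≤ u.2) : x u = 0 := by
  rw [qPoly_hEdges_of_le G x hu, eq_comm, mul_eq_zero] at hμx
  exact (pow_eq_zero_iff (by omega)).mp (hμx.resolve_left hμ)

theorem filter_mem_hEdges {k : ℕ} {v : V} {i : ℕ} (hi : i < k / 2) :
    (hEdges G k).filter (fun e => (v, i) ∈ e) =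
      (G.neighborFinset v).image fun w => blow k v ∪ blow k w := by
  ext e
  simp only [Finset.mem_filter, Finset.mem_image, SimpleGraph.mem_neighborFinset, mem_hEdges]
  constructor
  · rintro ⟨⟨a, b, hab, rfl⟩, hmem⟩
    rcases Finset.mem_union.mp hmem with h | h <;> obtain ⟨rfl, -⟩ := mem_blow.mp h
    · exact ⟨b, hab, rfl⟩
    · exact ⟨a, hab.symm, Finset.union_comm _ _⟩
  · rintro ⟨w, hw, rfl⟩
    exact ⟨⟨v, w, hw, rfl⟩, Finset.mem_union_left _ (mem_blow.mpr ⟨rfl, hi⟩)⟩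

theorem injOn_blow_union {k : ℕ} (hk : 0 < k / 2) (v : V) :
    Set.InjOn (fun w => blow k v ∪ blow k w) (G.neighborFinset v) := by
  intro w hw w' _ h
  have hwv : w ≠ v := (G.ne_of_adj ((SimpleGraph.mem_neighborFinset _ _ _).mp hw)).symm
  have hw0 : (w, 0) ∈ blow k v ∪ blow k w' := by
    rw [← show blow k v ∪ blow k w = blow k v ∪ blow k w' from h]
    exact Finset.mem_union_right _ (mem_blow.mpr ⟨rfl, hk⟩)
  rcases Finset.mem_union.mp hw0 with h0 | h0
  · exact absurd (mem_blow.mp h0).1 hwv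
  · exact (mem_blow.mp h0).1

theorem qPoly_hEdges {k : ℕ} (x : V × ℕ → ℂ) {v : V} {i : ℕ} (hi : i < k / 2) :
    qPoly (hEdges G k) k x (v, i) = G.degree v * x (v, i) ^ (k - 1) +
      ∑ w ∈ G.neighborFinset v, (∏ z ∈ (blow k v).erase (v, i), x z) * ∏ z ∈ blow k w, x z := by
  have hk : 0 < k / 2 := (Nat.zero_le i).trans_lt hi
  rw [qPoly, filter_mem_hEdges G hi, Finset.card_image_of_injOn (injOn_blow_union G hk v),
    SimpleGraph.card_neighborFinset_eq_degree, Finset.sum_image (injOn_blow_union G hk v)]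
  congr 1
  refine Finset.sum_congr rfl fun w hw => ?_
  have hvw : v ≠ w := G.ne_of_adj ((SimpleGraph.mem_neighborFinset _ _ _).mp hw)
  have hnot : (v, i) ∉ blow k w := fun h => hvw (mem_blow.mp h).1
  have hdisj : Disjoint ((blow k v).erase (v, i)) (blow k w) :=
    Finset.disjoint_left.mpr fun z hz hz' =>
      hvw ((mem_blow.mp (Finset.mem_of_mem_erase hz)).1.symm.trans (mem_blow.mp hz').1)
  rw [Finset.erase_union_distrib, Finset.erase_eq_of_notMem hnot, Finset.prod_union hdisj]

end BlowUp

section BlowUpVec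

variable {V : Type*}

-- Chosen so that its product over `blow k v` is `y v`.
noncomputable def blowUpVec (k : ℕ) (y : V → ℝ) (u : V × ℕ) : ℝ :=
  if u.2 < k / 2 then y u.1 ^ ((k / 2 : ℕ) : ℝ)⁻¹ else 0

variable {k : ℕ} {y : V → ℝ}

theorem blowUpVec_of_lt {v : V} {i : ℕ} (hi : i < k / 2) :
    blowUpVec k y (v, i) = y v ^ ((k / 2 : ℕ) : ℝ)⁻¹ :=
  if_pos hi

theorem blowUpVec_of_le {v : V} {i : ℕ} (hi : k / 2 ≤ i) : blowUpVec k y (v, i) = 0 :=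
  if_neg hi.not_gt

theorem blowUpVec_pos {v : V} {i : ℕ} (hi : i < k / 2) (hy : 0 < y v) :
    0 < blowUpVec k y (v, i) := by
  rw [blowUpVec_of_lt hi]
  exact Real.rpow_pos_of_pos hy _

theorem blowUpVec_pow {v : V} {i : ℕ} (hi : i < k / 2) (hy : 0 ≤ y v) :
    blowUpVec k y (v, i) ^ (k / 2) = y v := by
  rw [blowUpVec_of_lt hi]
  exact Real.rpow_inv_natCast_pow hy (by omega)

theorem blowUpVec_pow_smul {c : ℝ} (hc : 0 ≤ c) (hy : 0 ≤ y) :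
    blowUpVec k (c ^ (k / 2) • y) = c • blowUpVec k y := by
  ext ⟨v, i⟩
  rcases lt_or_ge i (k / 2) with hi | hi
  · rw [Pi.smul_apply, blowUpVec_of_lt hi, blowUpVec_of_lt hi, Pi.smul_apply, smul_eq_mul,
      smul_eq_mul, Real.mul_rpow (pow_nonneg hc _) (hy v), Real.pow_rpow_inv_natCast hc (by omega)]
  · rw [Pi.smul_apply, blowUpVec_of_le hi, blowUpVec_of_le hi, smul_zero]

variable [Fintype V] [DecidableEq V] (G : SimpleGraph V) [DecidableRel G.Adj]

theorem qPoly_blowUpVec (hk : Even k) (hk2 : 2 ≤ k) {ρ : ℝ} (hy : 0 ≤ y)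
    (h : G.signlessLapMatrix ℝ *ᵥ y = ρ • y) (u : V × ℕ) :
    qPoly (hEdges G k) k (fun u => (blowUpVec k y u : ℂ)) u =
      ρ * (blowUpVec k y u : ℂ) ^ (k - 1) := by
  obtain ⟨v, i⟩ := u
  rcases lt_or_ge i (k / 2) with hi | hi
  swap
  · rw [qPoly_hEdges_of_le G _ hi, blowUpVec_of_le hi, Complex.ofReal_zero,
      zero_pow (by omega), mul_zero]
  have hconst : ∀ w, ∀ z ∈ blow k w, (blowUpVec k y z : ℂ) = blowUpVec k y (w, i) := by
    rintro w ⟨a, j⟩ hz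
    obtain ⟨rfl, hj⟩ := mem_blow.mp hz
    rw [blowUpVec_of_lt hj, blowUpVec_of_lt hi]
  have hprod_erase : ∏ z ∈ (blow k v).erase (v, i), (blowUpVec k y z : ℂ) =
      (blowUpVec k y (v, i) : ℂ) ^ (k / 2 - 1) := by
    have hvi : (v, i) ∈ blow k v := mem_blow.mpr ⟨rfl, hi⟩
    rw [Finset.prod_congr rfl fun z hz => hconst v z (Finset.mem_of_mem_erase hz),
      Finset.prod_const, Finset.card_erase_of_mem hvi, card_blow]
  have hprod : ∀ w, ∏ z ∈ blow k w, (blowUpVec k y z : ℂ) = y w := by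
    intro w
    rw [Finset.prod_congr rfl (hconst w), Finset.prod_const, card_blow, ← Complex.ofReal_pow,
      blowUpVec_pow hi (hy w)]
  have hsplit : (blowUpVec k y (v, i) : ℂ) ^ (k - 1) =
      (blowUpVec k y (v, i) : ℂ) ^ (k / 2 - 1) * y v := by
    obtain ⟨m, rfl⟩ := hk
    rw [← blowUpVec_pow hi (hy v), Complex.ofReal_pow, ← pow_add]
    congr 1
    omega
  have heig : (G.degree v : ℂ) * y v + ∑ w ∈ G.neighborFinset v, (y w : ℂ) = ρ * y v := by
    have := congrArg Complex.ofReal (congrFun h v)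
    rw [SimpleGraph.signlessLapMatrix_mulVec_apply, Pi.smul_apply, smul_eq_mul] at this
    push_cast at this
    exact this
  rw [qPoly_hEdges G _ hi, hprod_erase, Finset.sum_congr rfl fun w _ => by rw [hprod w],
    ← Finset.mul_sum, hsplit]
  linear_combination (blowUpVec k y (v, i) : ℂ) ^ (k / 2 - 1) * heig

theorem norm_le_of_qPoly_hEdges_eq (hk : Even k) (hk2 : 2 ≤ k) {ρ : ℝ} (hy : ∀ v, 0 < y v)
    (h : G.signlessLapMatrix ℝ *ᵥ y = ρ • y) {μ : ℂ} {x : V × ℕ → ℂ} (hx : x ≠ 0)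
    (hμx : ∀ u, qPoly (hEdges G k) k x u = μ * x u ^ (k - 1)) : ‖μ‖ ≤ ρ := by
  obtain ⟨u₁, hu₁⟩ := Function.ne_iff.mp hx
  have hρ : 0 ≤ ρ :=
    haveI : Nonempty V := ⟨u₁.1⟩
    Matrix.nonneg_of_mulVec_eq_smul G.signlessLapMatrix_nonneg hy h
  rcases eq_or_ne μ 0 with rfl | hμ
  · simpa using hρ
  have hvanish : ∀ u : V × ℕ, k / 2 ≤ u.2 → x u = 0 :=
    fun u hu => eq_zero_of_qPoly_hEdges_eq G hk2 hμ (hμx u) hu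
  have hS : ∀ u : V × ℕ, u ∈ (Finset.univ ×ˢ Finset.range (k / 2)) ↔ u.2 < k / 2 := by
    simp
  obtain ⟨u, hu, c, hc, hxu, hle⟩ :=
    (Finset.univ ×ˢ Finset.range (k / 2)).exists_eq_mul_and_forall_le_mul (f := (‖x ·‖))
      (w := blowUpVec k y) (fun u hu => blowUpVec_pos ((hS u).mp hu) (hy u.1))
      ((hS u₁).mpr (not_le.mp fun h => hu₁ (hvanish u₁ h))) (norm_pos_iff.mpr hu₁)
  have hr : blowUpVec k (c ^ (k / 2) • y) = c • blowUpVec k y :=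
    blowUpVec_pow_smul hc.le fun v => (hy v).le
  have hxr : ∀ w, ‖x w‖ ≤ blowUpVec k (c ^ (k / 2) • y) w := by
    intro w
    rw [hr, Pi.smul_apply, smul_eq_mul]
    by_cases hw : w.2 < k / 2
    · exact hle w ((hS w).mpr hw)
    · rw [hvanish w (not_lt.mp hw), norm_zero, blowUpVec_of_le (not_lt.mp hw), mul_zero]
  have hxu' : ‖x u‖ = blowUpVec k (c ^ (k / 2) • y) u := by
    rw [hr, Pi.smul_apply, smul_eq_mul, hxu]
  refine norm_le_of_qPoly_eq hρ hxr (norm_pos_iff.mp ?_) hxu' (hμx u)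
    (qPoly_blowUpVec G hk hk2 (smul_nonneg (pow_nonneg hc.le _) fun v => (hy v).le)
      (by rw [Matrix.mulVec_smul, h, smul_comm]) u)
  exact hxu ▸ mul_pos hc (blowUpVec_pos ((hS u).mp hu) (hy u.1))

end BlowUpVec

theorem hQSpecRad_hEdges_eq_of_mulVec_eq_smul {V : Type*} [Fintype V] [DecidableEq V]
    [Nonempty V] (G : SimpleGraph V) [DecidableRel G.Adj] {k : ℕ} (hk : Even k) (hk2 : 2 ≤ k)
    {ρ : ℝ} {y : V → ℝ} (hy : ∀ v, 0 < y v) (h : G.signlessLapMatrix ℝ *ᵥ y = ρ • y) :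
    hQSpecRad (hEdges G k) k = ρ := by
  have hρ := Matrix.nonneg_of_mulVec_eq_smul G.signlessLapMatrix_nonneg hy h
  refine IsGreatest.csSup_eq ⟨⟨ρ, fun u => (blowUpVec k y u : ℂ), fun h0 => ?_,
    qPoly_blowUpVec G hk hk2 (fun v => (hy v).le) h, by simp [abs_of_nonneg hρ]⟩, ?_⟩
  · obtain ⟨v⟩ := ‹Nonempty V›
    have hv := congrFun h0 (v, 0)
    exact (blowUpVec_pos (by omega) (hy v)).ne' (Complex.ofReal_eq_zero.mp hv)
  · rintro _ ⟨μ, x, hx, hμx, rfl⟩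
    exact norm_le_of_qPoly_hEdges_eq G hk hk2 hy h hx hμx

/-- For a connected graph `G` and even `k ≥ 4`, the spectral radius of the signless
Laplacian tensor of `G^{k,k/2}` equals the spectral radius of the signless Laplacian
matrix `Q(G) = D(G) + A(G)`. -/
theorem stmt_15 {V : Type*} [Fintype V] [DecidableEq V] (G : SimpleGraph V)
    [DecidableRel G.Adj] (hG : G.Connected) (k : ℕ) (hk : Even k) (hk4 : 4 ≤ k) :
    hQSpecRad (hEdges G k) k =
      specRad (Matrix.diagonal (fun v => (G.degree v : ℝ)) + G.adjMatrix ℝ) := by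
  have := hG.nonempty
  obtain ⟨ρ, y, hy, h⟩ := hG.exists_pos_eigenvector_signlessLapMatrix
  exact (hQSpecRad_hEdges_eq_of_mulVec_eq_smul G hk (by omega) hy h).trans
    (G.specRad_signlessLapMatrix_eq_of_mulVec_eq_smul hy h).symm
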